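/- arXiv:1603.03342 — 2 statements merged into one kernel-verified Lean document; each statement's English description precedes it below -/
import Mathlib

section
/- Let N ≥ 2 and let q = (q₁,…,q_N) be a central configuration in H³ with constant λ, i.e. a nonsingular configuration satisfying ∇_{qᵢ}U(q) = λ∇_{qᵢ}I(q) for all i. Then Σᵢ mᵢ rᵢ² ρᵢ² > 0 (in particular not all qᵢ lie on H¹_zw), and λ = [Σ_{1≤i<j≤N} mᵢmⱼ(2xᵢxⱼ + 2yᵢyⱼ − (rᵢ²+rⱼ²) cosh d_ij)/sinh³ d_ij] / [2 Σᵢ mᵢ rᵢ² ρᵢ²] < 0. -/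
/-!
Pairing the equation `∇_{qᵢ}U = λ ∇_{qᵢ}I` with `(xᵢ, yᵢ)` in the `x`, `y` coordinates and summing
over `i` turns the force side into the pair sum of the numerator and the inertia side into
`2λ Σ mᵢ rᵢ² ρᵢ²`, where `ρᵢ² = 1 + rᵢ² > 0` on `H³`. Each pair term is `≤ 0` because
`2xᵢxⱼ + 2yᵢyⱼ ≤ rᵢ² + rⱼ² ≤ (rᵢ² + rⱼ²) cosh dᵢⱼ`, strictly if `rᵢ² + rⱼ² > 0`. So everything
hinges on some body lying off `H¹_zw`. If none did, `∇I` would vanish and hence so would `∇U`;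
but the body with the largest `z` on the geodesic `H¹_zw` is pulled back by all the others.
-/

noncomputable section
open Real Finset

/-- Vectors in `ℝ⁴`. -/
abbrev V4 : Type := Fin 4 → ℝ

/-- Euclidean dot product on `ℝ⁴`. -/
def dot4 (p q : V4) : ℝ := p 0 * q 0 + p 1 * q 1 + p 2 * q 2 + p 3 * q 3

/-- Minkowski bilinear form on `ℝ⁴`. -/
def mdot4 (p q : V4) : ℝ := p 0 * q 0 + p 1 * q 1 + p 2 * q 2 - p 3 * q 3

/-- The unit sphere `S³ ⊂ ℝ⁴`. -/
def sphere3 : Set V4 := {p | p 0 ^ 2 + p 1 ^ 2 + p 2 ^ 2 + p 3 ^ 2 = 1}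

/-- The upper hyperbolic sphere `H³ ⊂ ℝ⁴`. -/
def hyper3 : Set V4 := {p | p 0 ^ 2 + p 1 ^ 2 + p 2 ^ 2 - p 3 ^ 2 = -1 ∧ 0 < p 3}

/-- Inverse hyperbolic cosine. -/
def arcosh (x : ℝ) : ℝ := Real.log (x + Real.sqrt (x ^ 2 - 1))

/-- Spherical distance on `S³`. -/
def dS (p q : V4) : ℝ := Real.arccos (dot4 p q)

/-- Hyperbolic distance on `H³`. -/
def dH (p q : V4) : ℝ := _root_.arcosh (-(mdot4 p q))

/-- Gradient of the cotangent force function on `(S³)^N` at the body `i`. -/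
def gradUS {N : ℕ} (m : Fin N → ℝ) (q : Fin N → V4) (i : Fin N) : V4 :=
  ∑ j ∈ Finset.univ.erase i,
    (m i * m j / (Real.sin (dS (q i) (q j))) ^ 3) • (q j - Real.cos (dS (q i) (q j)) • q i)

/-- Gradient of the cotangent force function on `(H³)^N` at the body `i`. -/
def gradUH {N : ℕ} (m : Fin N → ℝ) (q : Fin N → V4) (i : Fin N) : V4 :=
  ∑ j ∈ Finset.univ.erase i,
    (m i * m j / (Real.sinh (dH (q i) (q j))) ^ 3) • (q j - Real.cosh (dH (q i) (q j)) • q i)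

/-- Gradient of the moment of inertia `I(q) = Σ mᵢ(xᵢ²+yᵢ²)` on `(S³)^N` at the body `i`. -/
def gradIS {N : ℕ} (m : Fin N → ℝ) (q : Fin N → V4) (i : Fin N) : V4 :=
  (2 * m i) •
    ![q i 0 * (q i 2 ^ 2 + q i 3 ^ 2), q i 1 * (q i 2 ^ 2 + q i 3 ^ 2),
      -(q i 2 * (q i 0 ^ 2 + q i 1 ^ 2)), -(q i 3 * (q i 0 ^ 2 + q i 1 ^ 2))]

/-- Gradient of the moment of inertia `I(q) = Σ mᵢ(xᵢ²+yᵢ²)` on `(H³)^N` at the body `i`. -/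
def gradIH {N : ℕ} (m : Fin N → ℝ) (q : Fin N → V4) (i : Fin N) : V4 :=
  (2 * m i) •
    ![q i 0 * (q i 3 ^ 2 - q i 2 ^ 2), q i 1 * (q i 3 ^ 2 - q i 2 ^ 2),
      q i 2 * (q i 0 ^ 2 + q i 1 ^ 2), q i 3 * (q i 0 ^ 2 + q i 1 ^ 2)]

/-- The action of the rotation `A_{α,β}(t) ∈ SO(4)` on `ℝ⁴`. -/
def rotA (α β t : ℝ) (p : V4) : V4 :=
  ![Real.cos (α * t) * p 0 - Real.sin (α * t) * p 1,
    Real.sin (α * t) * p 0 + Real.cos (α * t) * p 1,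
    Real.cos (β * t) * p 2 - Real.sin (β * t) * p 3,
    Real.sin (β * t) * p 2 + Real.cos (β * t) * p 3]

/-- The action of the transformation `B_{α,β}(t) ∈ SO(3,1)` on `ℝ⁴`. -/
def rotB (α β t : ℝ) (p : V4) : V4 :=
  ![Real.cos (α * t) * p 0 - Real.sin (α * t) * p 1,
    Real.sin (α * t) * p 0 + Real.cos (α * t) * p 1,
    Real.cosh (β * t) * p 2 + Real.sinh (β * t) * p 3,
    Real.sinh (β * t) * p 2 + Real.cosh (β * t) * p 3]

/-- The great circle `S¹_xy`. -/
def S1xy : Set V4 := {p | p 0 ^ 2 + p 1 ^ 2 = 1 ∧ p 2 = 0 ∧ p 3 = 0}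

/-- The great circle `S¹_zw`. -/
def S1zw : Set V4 := {p | p 2 ^ 2 + p 3 ^ 2 = 1 ∧ p 0 = 0 ∧ p 1 = 0}

/-- The geodesic `H¹_zw`. -/
def H1zw : Set V4 := {p | p 3 ^ 2 - p 2 ^ 2 = 1 ∧ 0 < p 3 ∧ p 0 = 0 ∧ p 1 = 0}

lemma mdot4_comm (p r : V4) : mdot4 p r = mdot4 r p := by
  unfold mdot4; ring

lemma dH_comm (p r : V4) : dH p r = dH r p := by
  rw [dH, dH, mdot4_comm]

lemma rhoSq_eq_one_add_rSq {p : V4} (hp : p ∈ hyper3) :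
    p 3 ^ 2 - p 2 ^ 2 = 1 + (p 0 ^ 2 + p 1 ^ 2) := by
  linarith [hp.1]

lemma hyper3_ext {p r : V4} (hp : p ∈ hyper3) (hr : r ∈ hyper3)
    (h0 : p 0 = r 0) (h1 : p 1 = r 1) (h2 : p 2 = r 2) : p = r := by
  have h3 : p 3 = r 3 := by
    refine (pow_left_inj₀ hp.2.le hr.2.le two_ne_zero).mp ?_
    linarith [hp.1, hr.1, show p 0 ^ 2 + p 1 ^ 2 + p 2 ^ 2 = r 0 ^ 2 + r 1 ^ 2 + r 2 ^ 2 by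
      rw [h0, h1, h2]]
  funext k
  fin_cases k <;> assumption

lemma one_lt_neg_mdot4 {p r : V4} (hp : p ∈ hyper3) (hr : r ∈ hyper3) (hne : p ≠ r) :
    1 < -mdot4 p r := by
  have hspatial : 0 < (p 0 - r 0) ^ 2 + (p 1 - r 1) ^ 2 + (p 2 - r 2) ^ 2 := by
    by_contra! h
    exact hne (hyper3_ext hp hr (by nlinarith [sq_nonneg (p 1 - r 1), sq_nonneg (p 2 - r 2)])
      (by nlinarith [sq_nonneg (p 0 - r 0), sq_nonneg (p 2 - r 2)])
      (by nlinarith [sq_nonneg (p 0 - r 0), sq_nonneg (p 1 - r 1)]))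
  -- `(p₃ r₃)² - (1 + a·b)² = |a - b|² + |a × b|²` for the spatial parts `a`, `b`
  have hsq : (1 + (p 0 * r 0 + p 1 * r 1 + p 2 * r 2)) ^ 2 < (p 3 * r 3) ^ 2 := by
    nlinarith [hp.1, hr.1, sq_nonneg (p 0 * r 1 - p 1 * r 0), sq_nonneg (p 0 * r 2 - p 2 * r 0),
      sq_nonneg (p 1 * r 2 - p 2 * r 1)]
  have := abs_lt_of_sq_lt_sq' hsq (mul_pos hp.2 hr.2).le
  unfold mdot4
  linarith

lemma arcosh_eq_real_arcosh : _root_.arcosh = Real.arcosh := rfl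

lemma dH_pos {p r : V4} (hp : p ∈ hyper3) (hr : r ∈ hyper3) (hne : p ≠ r) : 0 < dH p r := by
  rw [dH, arcosh_eq_real_arcosh]
  exact Real.arcosh_pos (one_lt_neg_mdot4 hp hr hne)

lemma sinh_dH_pos {p r : V4} (hp : p ∈ hyper3) (hr : r ∈ hyper3) (hne : p ≠ r) :
    0 < Real.sinh (dH p r) :=
  Real.sinh_pos_iff.mpr (dH_pos hp hr hne)

lemma one_lt_cosh_dH {p r : V4} (hp : p ∈ hyper3) (hr : r ∈ hyper3) (hne : p ≠ r) :
    1 < Real.cosh (dH p r) :=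
  Real.one_lt_cosh.mpr (dH_pos hp hr hne).ne'

lemma Finset.sum_erase_eq_sum_lt_add {ι M : Type*} [Fintype ι] [LinearOrder ι]
    [AddCommMonoid M] (g : ι → ι → M) :
    ∑ i, ∑ j ∈ univ.erase i, g i j = ∑ i, ∑ j ∈ univ.filter (fun j => i < j), (g i j + g j i) := by
  have hsplit : ∀ i, ∑ j ∈ univ.erase i, g i j =
      ∑ j ∈ univ.filter (fun j => i < j), g i j + ∑ j ∈ univ.filter (fun j => j < i), g i j := by
    intro i
    rw [← sum_union (disjoint_filter.mpr fun j _ h h' => lt_asymm h h')]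
    congr 1
    ext j
    simp [lt_or_lt_iff_ne, eq_comm]
  simp only [hsplit, sum_add_distrib, sum_filter]
  rw [sum_comm (f := fun i j => if j < i then g i j else 0)]

/-- Writing `(z, w) = (sinh s, cosh s)` and `(z', w') = (sinh s', cosh s')`, the left side is
`sinh (s' - s)`. -/
lemma mul_sub_mul_neg_of_lt {z w z' w' : ℝ} (hw : 0 < w) (hw' : 0 < w')
    (h : w ^ 2 - z ^ 2 = 1) (h' : w' ^ 2 - z' ^ 2 = 1) (hz : z' < z) :
    z' * w - w' * z < 0 := by
  have hcosh : ∀ {z w : ℝ}, 0 < w → w ^ 2 - z ^ 2 = 1 → w = Real.cosh (Real.arsinh z) := by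
    intro z w hw h
    rw [Real.cosh_arsinh, ← Real.sqrt_sq hw.le]
    congr 1
    linarith
  rw [hcosh hw h, hcosh hw' h', ← Real.sinh_arsinh z, ← Real.sinh_arsinh z', Real.arsinh_sinh,
    Real.arsinh_sinh, ← Real.sinh_sub, Real.sinh_neg_iff, sub_neg]
  exact Real.arsinh_strictMono hz

lemma H1zw_subset_hyper3 : H1zw ⊆ hyper3 := fun p ⟨h, hw, hx, hy⟩ =>
  ⟨by rw [hx, hy]; linarith, hw⟩

lemma mem_H1zw_of_rSq_nonpos {p : V4} (hp : p ∈ hyper3) (hr : p 0 ^ 2 + p 1 ^ 2 ≤ 0) :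
    p ∈ H1zw := by
  have hx : p 0 = 0 := by nlinarith [sq_nonneg (p 0), sq_nonneg (p 1)]
  have hy : p 1 = 0 := by nlinarith [sq_nonneg (p 0), sq_nonneg (p 1)]
  exact ⟨by linarith [rhoSq_eq_one_add_rSq hp, sq_nonneg (p 0), sq_nonneg (p 1)], hp.2, hx, hy⟩

lemma H1zw_ext {p r : V4} (hp : p ∈ H1zw) (hr : r ∈ H1zw) (h2 : p 2 = r 2) : p = r :=
  hyper3_ext (H1zw_subset_hyper3 hp) (H1zw_subset_hyper3 hr) (hp.2.2.1.trans hr.2.2.1.symm)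
    (hp.2.2.2.trans hr.2.2.2.symm) h2

section Gradients

variable {N : ℕ} (m : Fin N → ℝ) (q : Fin N → V4) (i : Fin N)

lemma gradUH_apply (k : Fin 4) :
    gradUH m q i k = ∑ j ∈ univ.erase i, m i * m j / Real.sinh (dH (q i) (q j)) ^ 3 *
      (q j k - Real.cosh (dH (q i) (q j)) * q i k) := by
  simp [gradUH, Finset.sum_apply]

lemma mul_gradUH_sub_mul_gradUH (a b : Fin 4) :
    q i b * gradUH m q i a - q i a * gradUH m q i b =
      ∑ j ∈ univ.erase i, m i * m j / Real.sinh (dH (q i) (q j)) ^ 3 *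
        (q j a * q i b - q j b * q i a) := by
  simp only [gradUH_apply, mul_sum, ← sum_sub_distrib]
  exact sum_congr rfl fun j _ => by ring

lemma xy_inner_gradUH :
    q i 0 * gradUH m q i 0 + q i 1 * gradUH m q i 1 =
      ∑ j ∈ univ.erase i, m i * m j / Real.sinh (dH (q i) (q j)) ^ 3 *
        (q i 0 * q j 0 + q i 1 * q j 1 - Real.cosh (dH (q i) (q j)) * (q i 0 ^ 2 + q i 1 ^ 2)) := by
  simp only [gradUH_apply, mul_sum, ← sum_add_distrib]
  exact sum_congr rfl fun j _ => by ring

lemma xy_inner_gradIH :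
    q i 0 * gradIH m q i 0 + q i 1 * gradIH m q i 1 =
      2 * (m i * (q i 0 ^ 2 + q i 1 ^ 2) * (q i 3 ^ 2 - q i 2 ^ 2)) := by
  simp [gradIH]
  ring

lemma gradIH_eq_zero_of_mem_H1zw (hi : q i ∈ H1zw) : gradIH m q i = 0 := by
  funext k
  fin_cases k <;> simp [gradIH, hi.2.2.1, hi.2.2.2]

/-- On `H¹_zw` the body with the largest `z` is pulled towards the others: the combination
`wᵢ ∂_z - zᵢ ∂_w` of its gradient kills the `cosh` terms and leaves positive multiples of
`zⱼ wᵢ - wⱼ zᵢ < 0`. -/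
lemma gradUH_ne_zero_of_mem_H1zw (hm : ∀ i, 0 < m i) (hq : ∀ i, q i ∈ H1zw)
    (hns : ∀ i j, i ≠ j → q i ≠ q j) (hmax : ∀ j, q j 2 ≤ q i 2) {j₀ : Fin N} (hj₀ : j₀ ≠ i) :
    gradUH m q i ≠ 0 := by
  intro hzero
  have hneg : ∑ j ∈ univ.erase i, m i * m j / Real.sinh (dH (q i) (q j)) ^ 3 *
      (q j 2 * q i 3 - q j 3 * q i 2) < 0 := by
    refine sum_neg (fun j hj => ?_) ⟨j₀, mem_erase.mpr ⟨hj₀, mem_univ _⟩⟩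
    have hji : q i ≠ q j := hns i j (ne_of_mem_erase hj).symm
    have hz : q j 2 < q i 2 := (hmax j).lt_of_ne fun h => hji (H1zw_ext (hq j) (hq i) h).symm
    refine mul_neg_of_pos_of_neg (div_pos (mul_pos (hm i) (hm j)) (pow_pos ?_ 3)) ?_
    · exact sinh_dH_pos (H1zw_subset_hyper3 (hq i)) (H1zw_subset_hyper3 (hq j)) hji
    · exact mul_sub_mul_neg_of_lt (hq i).2.1 (hq j).2.1 (hq i).1 (hq j).1 hz
  rw [← mul_gradUH_sub_mul_gradUH, hzero] at hneg
  simp at hneg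

end Gradients

/-- `Σᵢ mᵢ rᵢ² ρᵢ²`. -/
def rhoWeightedInertia {N : ℕ} (m : Fin N → ℝ) (q : Fin N → V4) : ℝ :=
  ∑ i, m i * (q i 0 ^ 2 + q i 1 ^ 2) * (q i 3 ^ 2 - q i 2 ^ 2)

/-- The `(i, j)` summand of the numerator of `λ`. -/
def xyVirialTerm {N : ℕ} (m : Fin N → ℝ) (q : Fin N → V4) (i j : Fin N) : ℝ :=
  m i * m j * (2 * q i 0 * q j 0 + 2 * q i 1 * q j 1 -
    ((q i 0 ^ 2 + q i 1 ^ 2) + (q j 0 ^ 2 + q j 1 ^ 2)) * Real.cosh (dH (q i) (q j))) /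
  Real.sinh (dH (q i) (q j)) ^ 3

section CentralConfiguration

variable {N : ℕ} {m : Fin N → ℝ} {q : Fin N → V4}

lemma rhoWeightedInertia_pos (hm : ∀ i, 0 < m i) (hq : ∀ i, q i ∈ hyper3) {i₁ : Fin N}
    (hi₁ : 0 < q i₁ 0 ^ 2 + q i₁ 1 ^ 2) : 0 < rhoWeightedInertia m q := by
  have hρ : ∀ i, 0 < q i 3 ^ 2 - q i 2 ^ 2 := fun i => by
    rw [rhoSq_eq_one_add_rSq (hq i)]; positivity
  refine sum_pos' (fun i _ => ?_) ⟨i₁, mem_univ _, by have := hm i₁; have := hρ i₁; positivity⟩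
  have := hm i; have := hρ i; positivity

/-- Pair both sides of the equation for body `i` with `(xᵢ, yᵢ)` and sum over `i`. -/
lemma sum_xyVirialTerm_eq {lam : ℝ} (hcc : ∀ i, gradUH m q i = lam • gradIH m q i) :
    ∑ i, ∑ j ∈ univ.filter (fun j => i < j), xyVirialTerm m q i j =
      lam * (2 * rhoWeightedInertia m q) := by
  calc ∑ i, ∑ j ∈ univ.filter (fun j => i < j), xyVirialTerm m q i j
      = ∑ i, ∑ j ∈ univ.erase i, m i * m j / Real.sinh (dH (q i) (q j)) ^ 3 *
          (q i 0 * q j 0 + q i 1 * q j 1 -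
            Real.cosh (dH (q i) (q j)) * (q i 0 ^ 2 + q i 1 ^ 2)) := by
        rw [sum_erase_eq_sum_lt_add]
        refine sum_congr rfl fun i _ => sum_congr rfl fun j _ => ?_
        rw [xyVirialTerm, dH_comm (q j)]
        ring
    _ = ∑ i, (q i 0 * gradUH m q i 0 + q i 1 * gradUH m q i 1) := by
        simp only [xy_inner_gradUH]
    _ = ∑ i, lam * (q i 0 * gradIH m q i 0 + q i 1 * gradIH m q i 1) := by
        simp only [hcc, Pi.smul_apply, smul_eq_mul, mul_add, mul_left_comm]
    _ = lam * (2 * rhoWeightedInertia m q) := by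
        simp only [xy_inner_gradIH, ← mul_sum, rhoWeightedInertia]

lemma xyVirialTerm_nonpos (hm : ∀ i, 0 < m i) (hq : ∀ i, q i ∈ hyper3)
    (hns : ∀ i j, i ≠ j → q i ≠ q j) {i j : Fin N} (hij : i ≠ j) : xyVirialTerm m q i j ≤ 0 := by
  have hc := one_lt_cosh_dH (hq i) (hq j) (hns i j hij)
  have hnum : 2 * q i 0 * q j 0 + 2 * q i 1 * q j 1 -
      ((q i 0 ^ 2 + q i 1 ^ 2) + (q j 0 ^ 2 + q j 1 ^ 2)) * Real.cosh (dH (q i) (q j)) ≤ 0 := by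
    nlinarith [sq_nonneg (q i 0 - q j 0), sq_nonneg (q i 1 - q j 1),
      mul_nonneg (by positivity : (0 : ℝ) ≤ (q i 0 ^ 2 + q i 1 ^ 2) + (q j 0 ^ 2 + q j 1 ^ 2))
        (sub_nonneg.mpr hc.le)]
  exact div_nonpos_of_nonpos_of_nonneg
    (mul_nonpos_of_nonneg_of_nonpos (mul_pos (hm i) (hm j)).le hnum)
    (pow_pos (sinh_dH_pos (hq i) (hq j) (hns i j hij)) 3).le

lemma xyVirialTerm_neg (hm : ∀ i, 0 < m i) (hq : ∀ i, q i ∈ hyper3)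
    (hns : ∀ i j, i ≠ j → q i ≠ q j) {i j : Fin N} (hij : i ≠ j)
    (hr : 0 < (q i 0 ^ 2 + q i 1 ^ 2) + (q j 0 ^ 2 + q j 1 ^ 2)) : xyVirialTerm m q i j < 0 := by
  have hc := one_lt_cosh_dH (hq i) (hq j) (hns i j hij)
  have hnum : 2 * q i 0 * q j 0 + 2 * q i 1 * q j 1 -
      ((q i 0 ^ 2 + q i 1 ^ 2) + (q j 0 ^ 2 + q j 1 ^ 2)) * Real.cosh (dH (q i) (q j)) < 0 := by
    nlinarith [sq_nonneg (q i 0 - q j 0), sq_nonneg (q i 1 - q j 1),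
      mul_pos hr (sub_pos.mpr hc)]
  exact div_neg_of_neg_of_pos (mul_neg_of_pos_of_neg (mul_pos (hm i) (hm j)) hnum)
    (pow_pos (sinh_dH_pos (hq i) (hq j) (hns i j hij)) 3)

lemma sum_xyVirialTerm_neg (hN : 2 ≤ N) (hm : ∀ i, 0 < m i) (hq : ∀ i, q i ∈ hyper3)
    (hns : ∀ i j, i ≠ j → q i ≠ q j) {i₁ : Fin N} (hi₁ : 0 < q i₁ 0 ^ 2 + q i₁ 1 ^ 2) :
    ∑ i, ∑ j ∈ univ.filter (fun j => i < j), xyVirialTerm m q i j < 0 := by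
  obtain ⟨k, hk⟩ := Fintype.exists_ne_of_one_lt_card (by rw [Fintype.card_fin]; exact hN) i₁
  obtain ⟨a, b, hab, hr⟩ : ∃ a b : Fin N, a < b ∧
      0 < (q a 0 ^ 2 + q a 1 ^ 2) + (q b 0 ^ 2 + q b 1 ^ 2) := by
    rcases hk.lt_or_gt with h | h
    · exact ⟨k, i₁, h, by positivity⟩
    · exact ⟨i₁, k, h, by positivity⟩
  have hinner : ∀ i, ∑ j ∈ univ.filter (fun j => i < j), xyVirialTerm m q i j ≤ 0 :=
    fun i => sum_nonpos fun j hj => xyVirialTerm_nonpos hm hq hns (mem_filter.mp hj).2.ne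
  refine sum_neg' (fun i _ => hinner i) ⟨a, mem_univ _, sum_neg' ?_ ?_⟩
  · exact fun j hj => xyVirialTerm_nonpos hm hq hns (mem_filter.mp hj).2.ne
  · exact ⟨b, mem_filter.mpr ⟨mem_univ _, hab⟩, xyVirialTerm_neg hm hq hns hab.ne hr⟩

end CentralConfiguration

/-- The value of `λ` for a central configuration in `H³` is negative. -/
theorem statement9 (N : ℕ) (hN : 2 ≤ N) (m : Fin N → ℝ) (hm : ∀ i, 0 < m i)
    (q : Fin N → V4) (hq : ∀ i, q i ∈ hyper3)
    (hns : ∀ i j, i ≠ j → q i ≠ q j) (lam : ℝ)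
    (hcc : ∀ i, gradUH m q i = lam • gradIH m q i) :
    (0 < ∑ i, m i * (q i 0 ^ 2 + q i 1 ^ 2) * (q i 3 ^ 2 - q i 2 ^ 2)) ∧
    lam = (∑ i, ∑ j ∈ Finset.univ.filter (fun j => i < j),
        m i * m j * (2 * q i 0 * q j 0 + 2 * q i 1 * q j 1 -
          ((q i 0 ^ 2 + q i 1 ^ 2) + (q j 0 ^ 2 + q j 1 ^ 2)) * Real.cosh (dH (q i) (q j))) /
        (Real.sinh (dH (q i) (q j))) ^ 3) /
      (2 * ∑ i, m i * (q i 0 ^ 2 + q i 1 ^ 2) * (q i 3 ^ 2 - q i 2 ^ 2)) ∧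
    lam < 0 := by
  change 0 < rhoWeightedInertia m q ∧
    lam = (∑ i, ∑ j ∈ univ.filter (fun j => i < j), xyVirialTerm m q i j) /
      (2 * rhoWeightedInertia m q) ∧ lam < 0
  obtain ⟨i₁, hi₁⟩ : ∃ i, 0 < q i 0 ^ 2 + q i 1 ^ 2 := by
    by_contra! hflat
    have hzw : ∀ i, q i ∈ H1zw := fun i => mem_H1zw_of_rSq_nonpos (hq i) (hflat i)
    obtain ⟨i₀, -, hmax⟩ := exists_max_image univ (fun i => q i 2)
      (univ_nonempty_iff.mpr ⟨⟨0, by omega⟩⟩)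
    obtain ⟨j₀, hj₀⟩ := Fintype.exists_ne_of_one_lt_card (by rw [Fintype.card_fin]; exact hN) i₀
    refine gradUH_ne_zero_of_mem_H1zw m q i₀ hm hzw hns (fun j => hmax j (mem_univ j)) hj₀ ?_
    rw [hcc, gradIH_eq_zero_of_mem_H1zw m q i₀ (hzw i₀), smul_zero]
  have hS := rhoWeightedInertia_pos hm hq hi₁
  have hT := sum_xyVirialTerm_eq hcc
  have hTneg := sum_xyVirialTerm_neg hN hm hq hns hi₁
  exact ⟨hS, by rw [hT]; field_simp, neg_of_mul_neg_left (hT ▸ hTneg) (by positivity)⟩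
end
end

section
/- (i) Let q be an ordinary central configuration in S³ with constant λ (so ∇_{qᵢ}U(q) = λ∇_{qᵢ}I(q) for all i, with some ∇_{qᵢ}U(q) ≠ 0). Then for every α,β ∈ ℝ with λ = (β²−α²)/2, the curve t ↦ (A_{α,β}(t)q₁,…,A_{α,β}(t)q_N) satisfies mᵢ q̈ᵢ(t) = ∇_{qᵢ}U(q(t)) − mᵢ(q̇ᵢ(t)·q̇ᵢ(t))qᵢ(t) for all t and i. (ii) Let q be a central configuration in H³ with constant λ. Then for every α,β ∈ ℝ with λ = −(α²+β²)/2 (such α,β exist since λ < 0), the curve t ↦ (B_{α,β}(t)q₁,…,B_{α,β}(t)q_N) satisfies mᵢ q̈ᵢ(t) = ∇_{qᵢ}U(q(t)) + mᵢ(q̇ᵢ(t)⊙q̇ᵢ(t))qᵢ(t) for all t and i. -/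
noncomputable section
open Real Finset

/-!
The curves are `q(t) = A(t) q` with `A(t) = exp(tJ)` for the generator `J` of the one-parameter
group, so `q̇ = A J q` and `q̈ = A J² q`. As `A(t)` is an isometry it commutes with `∇U` and
preserves `|q̇|² = |J q|²`, so the equation of motion at time `t` is `A(t)` applied to the
equation at time `0`, namely `mᵢ J² qᵢ = λ ∇I(qᵢ) ∓ mᵢ |J qᵢ|² qᵢ`. Coordinatewise this is an
identity on `S³` (resp. `H³`) once `λ` has the stated value.
-/

/-- `A_{α,β}(t) = exp (t • genA α β)`. -/
def genA (α β : ℝ) (p : V4) : V4 := ![-(α * p 1), α * p 0, -(β * p 3), β * p 2]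

/-- `B_{α,β}(t) = exp (t • genB α β)`. -/
def genB (α β : ℝ) (p : V4) : V4 := ![-(α * p 1), α * p 0, β * p 3, β * p 2]

section Sphere

variable (α β t : ℝ)

def rotALinear : V4 →ₗ[ℝ] V4 where
  toFun := rotA α β t
  map_add' p q := by
    funext k
    fin_cases k <;> simp only [rotA, Pi.add_apply, Fin.zero_eta, Fin.mk_one, Fin.reduceFinMk,
      Matrix.cons_val_zero, Matrix.cons_val_one, Matrix.cons_val] <;> ring
  map_smul' c p := by
    funext k
    fin_cases k <;> simp only [rotA, Pi.smul_apply, smul_eq_mul, RingHom.id_apply, Fin.zero_eta,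
      Fin.mk_one, Fin.reduceFinMk, Matrix.cons_val_zero, Matrix.cons_val_one,
      Matrix.cons_val] <;> ring

theorem hasDerivAt_rotA (p : V4) :
    HasDerivAt (fun s => rotA α β s p) (rotA α β t (genA α β p)) t := by
  have hα : HasDerivAt (fun s => α * s) α t := hasDerivAt_const_mul α
  have hβ : HasDerivAt (fun s => β * s) β t := hasDerivAt_const_mul β
  rw [hasDerivAt_pi]
  intro k
  fin_cases k <;> simp only [rotA, genA, Fin.zero_eta, Fin.mk_one, Fin.reduceFinMk,
    Matrix.cons_val_zero, Matrix.cons_val_one, Matrix.cons_val_two, Matrix.cons_val_three, Matrix.head_cons, Matrix.tail_cons]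
  · exact ((hα.cos.mul_const _).sub (hα.sin.mul_const _)).congr_deriv (by ring)
  · exact ((hα.sin.mul_const _).add (hα.cos.mul_const _)).congr_deriv (by ring)
  · exact ((hβ.cos.mul_const _).sub (hβ.sin.mul_const _)).congr_deriv (by ring)
  · exact ((hβ.sin.mul_const _).add (hβ.cos.mul_const _)).congr_deriv (by ring)

theorem deriv_rotA (p : V4) :
    deriv (fun s => rotA α β s p) = fun s => rotA α β s (genA α β p) :=
  funext fun s => (hasDerivAt_rotA α β s p).deriv

theorem deriv_deriv_rotA (p : V4) :
    deriv (deriv (fun s => rotA α β s p)) t = rotA α β t (genA α β (genA α β p)) := by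
  rw [deriv_rotA, deriv_rotA]

theorem dot4_rotA (p p' : V4) : dot4 (rotA α β t p) (rotA α β t p') = dot4 p p' := by
  simp only [dot4, rotA, Matrix.cons_val_zero, Matrix.cons_val_one, Matrix.cons_val_two,
    Matrix.cons_val_three, Matrix.head_cons, Matrix.tail_cons]
  linear_combination (p 0 * p' 0 + p 1 * p' 1) * sin_sq_add_cos_sq (α * t) +
    (p 2 * p' 2 + p 3 * p' 3) * sin_sq_add_cos_sq (β * t)

theorem gradUS_rotA {N : ℕ} (m : Fin N → ℝ) (q : Fin N → V4) (i : Fin N) :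
    gradUS m (fun j => rotA α β t (q j)) i = rotA α β t (gradUS m q i) := by
  change _ = rotALinear α β t (gradUS m q i)
  simp only [gradUS, dS, dot4_rotA, map_sum, map_sub, map_smul]
  rfl

theorem smul_genA_genA_of_mem_sphere3 {N : ℕ} (m : Fin N → ℝ) (q : Fin N → V4) (i : Fin N)
    (hq : q i ∈ sphere3) :
    m i • genA α β (genA α β (q i)) =
      ((β ^ 2 - α ^ 2) / 2) • gradIS m q i -
        (m i * dot4 (genA α β (q i)) (genA α β (q i))) • q i := by
  have hq : q i 0 ^ 2 + q i 1 ^ 2 + q i 2 ^ 2 + q i 3 ^ 2 = 1 := hq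
  funext k
  fin_cases k <;> simp only [gradIS, genA, dot4, Pi.smul_apply, Pi.sub_apply, smul_eq_mul,
    Fin.zero_eta, Fin.mk_one, Fin.reduceFinMk, Matrix.cons_val_zero, Matrix.cons_val_one,
    Matrix.cons_val_two, Matrix.cons_val_three, Matrix.head_cons, Matrix.tail_cons]
  · linear_combination m i * α ^ 2 * q i 0 * hq
  · linear_combination m i * α ^ 2 * q i 1 * hq
  · linear_combination m i * β ^ 2 * q i 2 * hq
  · linear_combination m i * β ^ 2 * q i 3 * hq

end Sphere

section Hyperbolic

variable (α β t : ℝ)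

def rotBLinear : V4 →ₗ[ℝ] V4 where
  toFun := rotB α β t
  map_add' p q := by
    funext k
    fin_cases k <;> simp only [rotB, Pi.add_apply, Fin.zero_eta, Fin.mk_one, Fin.reduceFinMk,
      Matrix.cons_val_zero, Matrix.cons_val_one, Matrix.cons_val] <;> ring
  map_smul' c p := by
    funext k
    fin_cases k <;> simp only [rotB, Pi.smul_apply, smul_eq_mul, RingHom.id_apply, Fin.zero_eta,
      Fin.mk_one, Fin.reduceFinMk, Matrix.cons_val_zero, Matrix.cons_val_one,
      Matrix.cons_val] <;> ring

theorem hasDerivAt_rotB (p : V4) :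
    HasDerivAt (fun s => rotB α β s p) (rotB α β t (genB α β p)) t := by
  have hα : HasDerivAt (fun s => α * s) α t := hasDerivAt_const_mul α
  have hβ : HasDerivAt (fun s => β * s) β t := hasDerivAt_const_mul β
  rw [hasDerivAt_pi]
  intro k
  fin_cases k <;> simp only [rotB, genB, Fin.zero_eta, Fin.mk_one, Fin.reduceFinMk,
    Matrix.cons_val_zero, Matrix.cons_val_one, Matrix.cons_val_two, Matrix.cons_val_three, Matrix.head_cons, Matrix.tail_cons]
  · exact ((hα.cos.mul_const _).sub (hα.sin.mul_const _)).congr_deriv (by ring)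
  · exact ((hα.sin.mul_const _).add (hα.cos.mul_const _)).congr_deriv (by ring)
  · exact ((hβ.cosh.mul_const _).add (hβ.sinh.mul_const _)).congr_deriv (by ring)
  · exact ((hβ.sinh.mul_const _).add (hβ.cosh.mul_const _)).congr_deriv (by ring)

theorem deriv_rotB (p : V4) :
    deriv (fun s => rotB α β s p) = fun s => rotB α β s (genB α β p) :=
  funext fun s => (hasDerivAt_rotB α β s p).deriv

theorem deriv_deriv_rotB (p : V4) :
    deriv (deriv (fun s => rotB α β s p)) t = rotB α β t (genB α β (genB α β p)) := by
  rw [deriv_rotB, deriv_rotB]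

theorem mdot4_rotB (p p' : V4) : mdot4 (rotB α β t p) (rotB α β t p') = mdot4 p p' := by
  simp only [mdot4, rotB, Matrix.cons_val_zero, Matrix.cons_val_one, Matrix.cons_val_two,
    Matrix.cons_val_three, Matrix.head_cons, Matrix.tail_cons]
  linear_combination (p 0 * p' 0 + p 1 * p' 1) * sin_sq_add_cos_sq (α * t) +
    (p 2 * p' 2 - p 3 * p' 3) * cosh_sq_sub_sinh_sq (β * t)

theorem gradUH_rotB {N : ℕ} (m : Fin N → ℝ) (q : Fin N → V4) (i : Fin N) :
    gradUH m (fun j => rotB α β t (q j)) i = rotB α β t (gradUH m q i) := by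
  change _ = rotBLinear α β t (gradUH m q i)
  simp only [gradUH, dH, mdot4_rotB, map_sum, map_sub, map_smul]
  rfl

theorem smul_genB_genB_of_mem_hyper3 {N : ℕ} (m : Fin N → ℝ) (q : Fin N → V4) (i : Fin N)
    (hq : q i ∈ hyper3) :
    m i • genB α β (genB α β (q i)) =
      (-(α ^ 2 + β ^ 2) / 2) • gradIH m q i +
        (m i * mdot4 (genB α β (q i)) (genB α β (q i))) • q i := by
  have hq : q i 0 ^ 2 + q i 1 ^ 2 + q i 2 ^ 2 - q i 3 ^ 2 = -1 := hq.1
  funext k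
  fin_cases k <;> simp only [gradIH, genB, mdot4, Pi.smul_apply, Pi.add_apply, smul_eq_mul,
    Fin.zero_eta, Fin.mk_one, Fin.reduceFinMk, Matrix.cons_val_zero, Matrix.cons_val_one,
    Matrix.cons_val_two, Matrix.cons_val_three, Matrix.head_cons, Matrix.tail_cons]
  · linear_combination -(m i * α ^ 2 * q i 0 * hq)
  · linear_combination -(m i * α ^ 2 * q i 1 * hq)
  · linear_combination m i * β ^ 2 * q i 2 * hq
  · linear_combination m i * β ^ 2 * q i 3 * hq

end Hyperbolic

/-- Each central configuration gives rise to families of relative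
equilibria: part (i) in `S³`, part (ii) in `H³`. -/
theorem statement10 :
    (∀ (N : ℕ) (m : Fin N → ℝ), (∀ i, 0 < m i) → ∀ q : Fin N → V4,
      (∀ i, q i ∈ sphere3) → (∀ i j, i ≠ j → q i ≠ q j ∧ q i ≠ -q j) →
      ∀ lam : ℝ, (∀ i, gradUS m q i = lam • gradIS m q i) →
      (∃ i, gradUS m q i ≠ 0) →
      ∀ α β : ℝ, lam = (β ^ 2 - α ^ 2) / 2 →
      ∀ (t : ℝ) (i : Fin N),
        m i • deriv (deriv (fun s => rotA α β s (q i))) t =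
          gradUS m (fun j => rotA α β t (q j)) i -
            (m i * dot4 (deriv (fun s => rotA α β s (q i)) t)
              (deriv (fun s => rotA α β s (q i)) t)) • rotA α β t (q i)) ∧
    (∀ (N : ℕ) (m : Fin N → ℝ), (∀ i, 0 < m i) → ∀ q : Fin N → V4,
      (∀ i, q i ∈ hyper3) → (∀ i j, i ≠ j → q i ≠ q j) →
      ∀ lam : ℝ, (∀ i, gradUH m q i = lam • gradIH m q i) →
      ∀ α β : ℝ, lam = -(α ^ 2 + β ^ 2) / 2 →
      ∀ (t : ℝ) (i : Fin N),
        m i • deriv (deriv (fun s => rotB α β s (q i))) t =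
          gradUH m (fun j => rotB α β t (q j)) i +
            (m i * mdot4 (deriv (fun s => rotB α β s (q i)) t)
              (deriv (fun s => rotB α β s (q i)) t)) • rotB α β t (q i)) := by
  refine ⟨fun N m _ q hq _ lam hc _ α β hlam t i => ?_,
    fun N m _ q hq _ lam hc α β hlam t i => ?_⟩
  · rw [deriv_deriv_rotA, deriv_rotA, gradUS_rotA, hc i, dot4_rotA, hlam]
    change m i • rotALinear α β t _ = rotALinear α β t _ - _ • rotALinear α β t _
    rw [← map_smul, ← map_smul, ← map_sub, smul_genA_genA_of_mem_sphere3 α β m q i (hq i)]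
  · rw [deriv_deriv_rotB, deriv_rotB, gradUH_rotB, hc i, mdot4_rotB, hlam]
    change m i • rotBLinear α β t _ = rotBLinear α β t _ + _ • rotBLinear α β t _
    rw [← map_smul, ← map_smul, ← map_add, smul_genB_genB_of_mem_hyper3 α β m q i (hq i)]
end
end
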